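/- arXiv:math/0309074 — 2 statements merged into one kernel-verified Lean document; each statement's English description precedes it below -/
import Mathlib

section
/- For every integer N ≥ 0, the sum of (dim λ)² over all partitions λ with |λ| = N equals N!. -/
open Filter Topology
open scoped Classical

/-- A partition: a nonincreasing sequence of nonnegative integers with only
finitely many nonzero terms.  `part i` is the `(i+1)`-st part `λ_{i+1}`. -/
structure PartitionSeq : Type where
  part : ℕ → ℕ
  antitone' : ∀ ⦃i j : ℕ⦄, i ≤ j → part j ≤ part i
  finite_support : ∃ N : ℕ, ∀ i : ℕ, N ≤ i → part i = 0

/-- The size `|λ| = Σᵢ λᵢ` of a partition. -/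
noncomputable def PartitionSeq.size (μ : PartitionSeq) : ℕ := ∑' i : ℕ, μ.part i

/-- `c : ℕ → Partition` is a standard-Young-tableau chain for `μ`:
`∅ = c 0 ⊂ c 1 ⊂ ⋯ ⊂ c |μ| = μ`, each step adding a single box
(i.e. the diagrams grow and the size increases by one at each step),
and `c` is frozen at `μ` from step `|μ|` on. -/
def IsSYTChain (μ : PartitionSeq) (c : ℕ → PartitionSeq) : Prop :=
  (∀ i : ℕ, (c 0).part i = 0) ∧
  (∀ k : ℕ, μ.size ≤ k → c k = μ) ∧
  (∀ k : ℕ, k < μ.size →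
    (∀ i : ℕ, (c k).part i ≤ (c (k + 1)).part i) ∧ (c (k + 1)).size = (c k).size + 1)

/-- `dim λ`: the number of standard Young tableaux of shape `λ`. -/
noncomputable def dimSYT (μ : PartitionSeq) : ℕ :=
  Set.ncard {c : ℕ → PartitionSeq | IsSYTChain μ c}

/-- The set `𝔖(λ) = {λᵢ - i + 1/2 : i ≥ 1} ⊂ ℤ + 1/2`, encoded by the integer
parts: a half-integer `k + 1/2` is represented by `k : ℤ`, so the set is
`{λᵢ - i : i ≥ 1}`. -/
def PartitionSeq.frontierSet (μ : PartitionSeq) : Set ℤ :=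
  {k : ℤ | ∃ i : ℕ, (μ.part i : ℤ) - (i + 1) = k}

/-!
Deleting the box that holds the largest entry of a standard Young tableau gives
`dim μ = ∑_{ν ⋖ μ} dim ν`. Young's lattice is a differential poset: every partition has exactly one
more upper cover than lower covers (row `0` is always addable, and row `r + 1` is addable iff row
`r` is removable), and two distinct partitions of the same size have a common upper cover iff they
have a common lower cover, namely their join and their meet. Hence `D U = U D + I` for the
operators `U`, `D` summing over upper and lower covers, and induction on `|ν|` gives
`∑_{μ ⋗ ν} dim μ = (|ν| + 1) dim ν`. Finally
`∑_{|μ| = N + 1} (dim μ)² = ∑_{|μ| = N + 1} ∑_{ν ⋖ μ} dim μ dim ν`, and summing over `ν` first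
gives `(N + 1) ∑_{|ν| = N} (dim ν)² = (N + 1)!`.
-/

namespace PartitionSeq

open Finset

lemma antitone (μ : PartitionSeq) : Antitone μ.part := fun _ _ h => μ.antitone' h

lemma part_injective : Function.Injective part := by
  rintro ⟨p, _, _⟩ ⟨q, _, _⟩ rfl
  rfl

lemma size_eq_sum_range {μ : PartitionSeq} {M : ℕ} (h : ∀ i, M ≤ i → μ.part i = 0) :
    μ.size = ∑ i ∈ range M, μ.part i :=
  tsum_eq_sum fun i hi => h i (by simpa using hi)

lemma lt_size_of_part_ne_zero {μ : PartitionSeq} {i : ℕ} (h : μ.part i ≠ 0) : i < μ.size := by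
  obtain ⟨M, hM⟩ := μ.finite_support
  have hiM : i < M := by by_contra! hi; exact h (hM i hi)
  calc i < ∑ _j ∈ range (i + 1), 1 := by simp
    _ ≤ ∑ j ∈ range (i + 1), μ.part j :=
        sum_le_sum fun j hj => by
          have := μ.antitone (Nat.lt_succ_iff.mp (mem_range.mp hj)); omega
    _ ≤ ∑ j ∈ range M, μ.part j := sum_le_sum_of_subset (range_subset_range.mpr hiM)
    _ = μ.size := (size_eq_sum_range hM).symm

lemma part_eq_zero_of_size_le {μ : PartitionSeq} {i : ℕ} (h : μ.size ≤ i) : μ.part i = 0 := by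
  by_contra hi
  exact absurd (lt_size_of_part_ne_zero hi) (not_lt.mpr h)

lemma size_eq_sum_range_of_size_le {μ : PartitionSeq} {M : ℕ} (h : μ.size ≤ M) :
    μ.size = ∑ i ∈ range M, μ.part i :=
  size_eq_sum_range fun _ hi => part_eq_zero_of_size_le (h.trans hi)

lemma part_le_size (μ : PartitionSeq) (i : ℕ) : μ.part i ≤ μ.size := by
  by_cases hi : μ.part i = 0
  · simp [hi]
  · rw [size_eq_sum_range_of_size_le le_rfl]
    exact single_le_sum (fun _ _ => Nat.zero_le _) (mem_range.mpr (lt_size_of_part_ne_zero hi))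

instance : LE PartitionSeq := ⟨fun μ ν => μ.part ≤ ν.part⟩
instance : LT PartitionSeq := ⟨fun μ ν => μ.part < ν.part⟩

instance : Max PartitionSeq :=
  ⟨fun μ ν => ⟨μ.part ⊔ ν.part, μ.antitone.sup ν.antitone, by
    obtain ⟨M, hM⟩ := μ.finite_support
    obtain ⟨M', hM'⟩ := ν.finite_support
    exact ⟨max M M', fun i hi => by
      simp [hM i (le_of_max_le_left hi), hM' i (le_of_max_le_right hi)]⟩⟩⟩

instance : Min PartitionSeq :=
  ⟨fun μ ν => ⟨μ.part ⊓ ν.part, μ.antitone.inf ν.antitone, by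
    obtain ⟨M, hM⟩ := μ.finite_support
    exact ⟨M, fun i hi => by simp [hM i hi]⟩⟩⟩

instance : Lattice PartitionSeq :=
  part_injective.lattice _ .rfl .rfl (fun _ _ => rfl) (fun _ _ => rfl)

instance : OrderBot PartitionSeq where
  bot := ⟨0, fun _ _ _ => le_rfl, ⟨0, fun _ _ => rfl⟩⟩
  bot_le μ i := Nat.zero_le (μ.part i)

lemma le_def {μ ν : PartitionSeq} : μ ≤ ν ↔ ∀ i, μ.part i ≤ ν.part i := Iff.rfl

@[simp] lemma sup_part (μ ν : PartitionSeq) (i : ℕ) : (μ ⊔ ν).part i = max (μ.part i) (ν.part i) :=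
  rfl

@[simp] lemma inf_part (μ ν : PartitionSeq) (i : ℕ) : (μ ⊓ ν).part i = min (μ.part i) (ν.part i) :=
  rfl

lemma size_eq_add_sum_sub_of_le {μ ν : PartitionSeq} (h : μ ≤ ν) {M : ℕ} (hM : ν.size ≤ M) :
    ν.size = μ.size + ∑ i ∈ range M, (ν.part i - μ.part i) := by
  have hμ : μ.size = ∑ i ∈ range M, μ.part i := size_eq_sum_range fun i hi =>
    Nat.eq_zero_of_le_zero (part_eq_zero_of_size_le (hM.trans hi) ▸ le_def.mp h i)
  rw [size_eq_sum_range_of_size_le hM, hμ, ← sum_add_distrib]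
  exact sum_congr rfl fun i _ => by have := le_def.mp h i; omega

lemma size_mono : Monotone size := fun _ _ h =>
  (size_eq_add_sum_sub_of_le h le_rfl).symm ▸ Nat.le_add_right _ _

lemma eq_of_le_of_size_le {μ ν : PartitionSeq} (h : μ ≤ ν) (hs : ν.size ≤ μ.size) : μ = ν := by
  have hsum := size_eq_add_sum_sub_of_le h le_rfl
  have hzero := sum_eq_zero_iff.mp (show ∑ i ∈ range ν.size, (ν.part i - μ.part i) = 0 by omega)
  refine part_injective (funext fun i => ?_)
  rcases lt_or_ge i ν.size with hi | hi
  · have := hzero i (mem_range.mpr hi); have := le_def.mp h i; omega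
  · rw [part_eq_zero_of_size_le hi, part_eq_zero_of_size_le ((size_mono h).trans hi)]

lemma size_eq_zero_iff {μ : PartitionSeq} : μ.size = 0 ↔ μ = ⊥ := by
  have hbot : (⊥ : PartitionSeq).size = 0 := size_eq_sum_range (M := 0) fun _ _ => rfl
  exact ⟨fun h => (eq_of_le_of_size_le bot_le (by omega)).symm, fun h => h ▸ hbot⟩

lemma size_inf_add_size_sup (μ ν : PartitionSeq) :
    (μ ⊓ ν).size + (μ ⊔ ν).size = μ.size + ν.size := by
  obtain ⟨M, hM⟩ : ∃ M, μ.size + ν.size ≤ M := ⟨_, le_rfl⟩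
  have hμ : ∀ i, M ≤ i → μ.part i = 0 := fun i hi => part_eq_zero_of_size_le (by omega)
  have hν : ∀ i, M ≤ i → ν.part i = 0 := fun i hi => part_eq_zero_of_size_le (by omega)
  rw [size_eq_sum_range hμ, size_eq_sum_range hν,
    size_eq_sum_range (μ := μ ⊓ ν) fun i hi => by simp [hμ i hi],
    size_eq_sum_range (μ := μ ⊔ ν) fun i hi => by simp [hμ i hi, hν i hi],
    ← sum_add_distrib, ← sum_add_distrib]
  exact sum_congr rfl fun i _ => by simp only [inf_part, sup_part]; omega

def Covers (ν μ : PartitionSeq) : Prop := ν ≤ μ ∧ μ.size = ν.size + 1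

section Covers

variable {ρ ν μ κ : PartitionSeq}

lemma Covers.eq_or_eq (h : Covers ν μ) (h₁ : ν ≤ κ) (h₂ : κ ≤ μ) : κ = ν ∨ κ = μ := by
  have := size_mono h₁
  have := size_mono h₂
  have := h.2
  rcases (by omega : κ.size ≤ ν.size ∨ μ.size ≤ κ.size) with hs | hs
  · exact .inl (eq_of_le_of_size_le h₁ hs).symm
  · exact .inr (eq_of_le_of_size_le h₂ hs)

lemma Covers.sup_eq (hν : Covers ν μ) (hκ : Covers κ μ) (hne : ν ≠ κ) : ν ⊔ κ = μ :=
  (hν.eq_or_eq le_sup_left (sup_le hν.1 hκ.1)).resolve_left fun h =>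
    hne (eq_of_le_of_size_le (sup_eq_left.mp h) (by have := hν.2; have := hκ.2; omega)).symm

lemma Covers.inf_eq (hν : Covers ρ ν) (hκ : Covers ρ κ) (hne : ν ≠ κ) : ν ⊓ κ = ρ :=
  (hν.eq_or_eq (le_inf hν.1 hκ.1) inf_le_left).resolve_right fun h =>
    hne (eq_of_le_of_size_le (inf_eq_left.mp h) (by have := hν.2; have := hκ.2; omega))

lemma Covers.covers_inf (hν : Covers ν μ) (hκ : Covers κ μ) (hne : ν ≠ κ) :
    Covers (ν ⊓ κ) ν ∧ Covers (ν ⊓ κ) κ := by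
  have hsize := size_inf_add_size_sup ν κ
  rw [hν.sup_eq hκ hne] at hsize
  have := hν.2
  have := hκ.2
  exact ⟨⟨inf_le_left, by omega⟩, ⟨inf_le_right, by omega⟩⟩

lemma Covers.covers_sup (hν : Covers ρ ν) (hκ : Covers ρ κ) (hne : ν ≠ κ) :
    Covers ν (ν ⊔ κ) ∧ Covers κ (ν ⊔ κ) := by
  have hsize := size_inf_add_size_sup ν κ
  rw [hν.inf_eq hκ hne] at hsize
  have := hν.2
  have := hκ.2
  exact ⟨⟨le_sup_left, by omega⟩, ⟨le_sup_right, by omega⟩⟩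

end Covers

lemma covers_iff_exists_index {ν μ : PartitionSeq} :
    Covers ν μ ↔ ∃ a, μ.part a = ν.part a + 1 ∧ ∀ j ≠ a, μ.part j = ν.part j := by
  constructor
  · rintro ⟨h, hs⟩
    have hsum := size_eq_add_sum_sub_of_le h le_rfl
    obtain ⟨a, ha, hfa⟩ : ∃ a ∈ range μ.size, μ.part a - ν.part a ≠ 0 := by
      by_contra! h0
      rw [sum_eq_zero h0] at hsum
      omega
    have hsplit := add_sum_erase _ (fun j => μ.part j - ν.part j) ha
    have hrest := sum_eq_zero_iff.mp
      (show ∑ j ∈ (range μ.size).erase a, (μ.part j - ν.part j) = 0 by omega)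
    refine ⟨a, by have := le_def.mp h a; omega, fun j hj => ?_⟩
    have := le_def.mp h j
    rcases lt_or_ge j μ.size with hjμ | hjμ
    · have := hrest j (mem_erase.mpr ⟨hj, mem_range.mpr hjμ⟩); omega
    · have := part_eq_zero_of_size_le hjμ; omega
  · rintro ⟨a, ha, hj⟩
    have hle : ν ≤ μ := le_def.mpr fun j => by
      by_cases hja : j = a
      · rw [hja]; omega
      · exact (hj j hja).ge
    refine ⟨hle, ?_⟩
    have haμ : a < μ.size := lt_size_of_part_ne_zero (by omega)
    rw [size_eq_add_sum_sub_of_le hle le_rfl,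
      sum_congr rfl fun j _ => (show μ.part j - ν.part j = if j = a then 1 else 0 by
        split_ifs with hja
        · subst hja; omega
        · rw [hj j hja]; omega),
      sum_ite_eq' _ _ (fun _ => 1), if_pos (mem_range.mpr haμ)]

lemma finite_setOf_size_eq (n : ℕ) : {μ : PartitionSeq | μ.size = n}.Finite := by
  refine Set.Finite.of_finite_image (f := fun μ (i : Fin (n + 1)) => μ.part i) ?_ ?_
  · refine (Set.finite_Iic fun _ => n).subset ?_
    rintro _ ⟨μ, rfl, rfl⟩ i
    exact part_le_size μ i
  · intro μ hμ ν hν h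
    refine part_injective (funext fun i => ?_)
    rcases lt_or_ge i (n + 1) with hi | hi
    · exact congrFun h ⟨i, hi⟩
    · rw [part_eq_zero_of_size_le (by rw [hμ]; omega), part_eq_zero_of_size_le (by rw [hν]; omega)]

noncomputable def ofSize (n : ℕ) : Finset PartitionSeq := (finite_setOf_size_eq n).toFinset

@[simp] lemma mem_ofSize {μ : PartitionSeq} {n : ℕ} : μ ∈ ofSize n ↔ μ.size = n :=
  Set.Finite.mem_toFinset _

lemma ofSize_zero : ofSize 0 = {⊥} := by
  ext μ
  simp [size_eq_zero_iff]

noncomputable def up (ν : PartitionSeq) : Finset PartitionSeq :=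
  (ofSize (ν.size + 1)).filter (Covers ν)

noncomputable def down (μ : PartitionSeq) : Finset PartitionSeq :=
  (ofSize (μ.size - 1)).filter (Covers · μ)

@[simp] lemma mem_up {ν μ : PartitionSeq} : μ ∈ up ν ↔ Covers ν μ := by
  simp only [up, mem_filter, mem_ofSize, and_iff_right_iff_imp]
  exact fun h => h.2

@[simp] lemma mem_down {ν μ : PartitionSeq} : ν ∈ down μ ↔ Covers ν μ := by
  simp only [down, mem_filter, mem_ofSize, and_iff_right_iff_imp]
  exact fun h => by have := h.2; omega

def Addable (μ : PartitionSeq) (a : ℕ) : Prop := ∀ j < a, μ.part a < μ.part j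

def Removable (μ : PartitionSeq) (r : ℕ) : Prop := μ.part (r + 1) < μ.part r

noncomputable def addBox (μ : PartitionSeq) (a : ℕ) (h : Addable μ a) : PartitionSeq where
  part j := μ.part j + if j = a then 1 else 0
  antitone' i j hij := by
    have := μ.antitone hij
    rcases hij.eq_or_lt with rfl | hlt
    · exact le_rfl
    · split_ifs with hj hi <;> try omega
      subst hj
      have := h i hlt
      omega
  finite_support := by
    obtain ⟨M, hM⟩ := μ.finite_support
    exact ⟨max M (a + 1), fun i hi => by
      rw [hM i (le_of_max_le_left hi), if_neg (by omega)]⟩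

noncomputable def removeBox (μ : PartitionSeq) (r : ℕ) (h : Removable μ r) : PartitionSeq where
  part j := μ.part j - if j = r then 1 else 0
  antitone' i j hij := by
    have := μ.antitone hij
    rcases hij.eq_or_lt with rfl | hlt
    · exact le_rfl
    · split_ifs <;> try omega
      rename_i hir
      subst hir
      have : μ.part j ≤ μ.part (i + 1) := μ.antitone (by omega)
      have : μ.part (i + 1) < μ.part i := h
      omega
  finite_support := by
    obtain ⟨M, hM⟩ := μ.finite_support
    exact ⟨M, fun i hi => by rw [hM i hi, Nat.zero_sub]⟩

section Boxes

variable {μ : PartitionSeq} {a r : ℕ}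

lemma addable_zero (μ : PartitionSeq) : Addable μ 0 := fun _ h => absurd h (Nat.not_lt_zero _)

lemma addable_succ_iff : Addable μ (r + 1) ↔ Removable μ r :=
  ⟨fun h => h r r.lt_succ_self, fun h _ hj => h.trans_le (μ.antitone (Nat.lt_succ_iff.mp hj))⟩

lemma Removable.lt_size (h : Removable μ r) : r < μ.size :=
  lt_size_of_part_ne_zero (Nat.ne_zero_of_lt h)

lemma Addable.le_size (h : Addable μ a) : a ≤ μ.size := by
  cases a with
  | zero => exact Nat.zero_le _
  | succ r => exact (addable_succ_iff.mp h).lt_size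

lemma addBox_part (h : Addable μ a) (j : ℕ) :
    (μ.addBox a h).part j = μ.part j + if j = a then 1 else 0 := rfl

lemma removeBox_part (h : Removable μ r) (j : ℕ) :
    (μ.removeBox r h).part j = μ.part j - if j = r then 1 else 0 := rfl

lemma covers_addBox (h : Addable μ a) : Covers μ (μ.addBox a h) :=
  covers_iff_exists_index.mpr ⟨a, by simp [addBox_part], fun j hj => by simp [addBox_part, hj]⟩

lemma covers_removeBox (h : Removable μ r) : Covers (μ.removeBox r h) μ := by
  have : μ.part (r + 1) < μ.part r := h
  exact covers_iff_exists_index.mpr ⟨r, by simp [removeBox_part]; omega,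
    fun j hj => by simp [removeBox_part, hj]⟩

end Boxes

lemma card_up (ν : PartitionSeq) : #(up ν) = #((range (ν.size + 1)).filter (Addable ν)) := by
  symm
  refine card_bij (fun a ha => ν.addBox a (mem_filter.mp ha).2)
    (fun a ha => mem_up.mpr (covers_addBox _)) (fun a _ b _ hab => ?_) (fun μ hμ => ?_)
  · by_contra hne
    have := congrArg (fun μ => μ.part a) hab
    simp [addBox_part, hne] at this
  · obtain ⟨a, ha, hj⟩ := covers_iff_exists_index.mp (mem_up.mp hμ)
    have hadd : Addable ν a := fun j hja => by
      have := μ.antitone hja.le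
      rw [hj j hja.ne] at this
      omega
    refine ⟨a, mem_filter.mpr ⟨mem_range.mpr (Nat.lt_succ_of_le hadd.le_size), hadd⟩,
      part_injective (funext fun j => ?_)⟩
    by_cases hja : j = a
    · subst hja; simp [addBox_part, ha]
    · simp [addBox_part, hja, hj j hja]

lemma card_down (μ : PartitionSeq) : #(down μ) = #((range μ.size).filter (Removable μ)) := by
  symm
  refine card_bij (fun r hr => μ.removeBox r (mem_filter.mp hr).2)
    (fun r hr => mem_down.mpr (covers_removeBox _)) (fun a ha b _ hab => ?_) (fun ν hν => ?_)
  · by_contra hne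
    have hpart := congrArg (fun μ => μ.part a) hab
    have : μ.part (a + 1) < μ.part a := (mem_filter.mp ha).2
    simp [removeBox_part, hne] at hpart
    omega
  · obtain ⟨r, hr, hj⟩ := covers_iff_exists_index.mp (mem_down.mp hν)
    have hrem : Removable μ r := by
      have := ν.antitone (show r ≤ r + 1 by omega)
      have := hj (r + 1) (by omega)
      show μ.part (r + 1) < μ.part r
      omega
    refine ⟨r, mem_filter.mpr ⟨mem_range.mpr hrem.lt_size, hrem⟩,
      part_injective (funext fun j => ?_)⟩
    by_cases hjr : j = r
    · subst hjr; simp [removeBox_part, hr]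
    · simp [removeBox_part, hjr, hj j hjr]

lemma card_up_eq_card_down_add_one (ν : PartitionSeq) : #(up ν) = #(down ν) + 1 := by
  rw [card_up, card_down, card_filter, card_filter, sum_range_succ']
  simp [addable_succ_iff, addable_zero]

/-- The pairs `l ⋖ μ ⋗ ν` and `l ⋗ ρ ⋖ ν` with `ν ≠ l` correspond via `μ = l ⊔ ν`, `ρ = l ⊓ ν`. -/
lemma sum_up_sum_down_erase {M : Type*} [AddCommMonoid M] (g : PartitionSeq → M)
    (l : PartitionSeq) :
    ∑ μ ∈ up l, ∑ ν ∈ (down μ).erase l, g ν = ∑ ρ ∈ down l, ∑ ν ∈ (up ρ).erase l, g ν := by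
  rw [sum_sigma', sum_sigma']
  refine sum_nbij' (fun x => ⟨l ⊓ x.2, x.2⟩) (fun x => ⟨l ⊔ x.2, x.2⟩) ?_ ?_ ?_ ?_
    fun _ _ => rfl
  all_goals
    intro x hx
    simp only [mem_sigma, mem_up, mem_erase, mem_down] at hx ⊢
    obtain ⟨h₁, hne, h₂⟩ := hx
  · exact ⟨(h₁.covers_inf h₂ hne.symm).1, hne, (h₁.covers_inf h₂ hne.symm).2⟩
  · exact ⟨(h₁.covers_sup h₂ hne.symm).1, hne, (h₁.covers_sup h₂ hne.symm).2⟩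
  · exact Sigma.ext (h₁.sup_eq h₂ hne.symm) HEq.rfl
  · exact Sigma.ext (h₁.inf_eq h₂ hne.symm) HEq.rfl

theorem sum_up_sum_down {M : Type*} [AddCommMonoid M] (g : PartitionSeq → M) (l : PartitionSeq) :
    ∑ μ ∈ up l, ∑ ν ∈ down μ, g ν = ∑ ρ ∈ down l, ∑ ν ∈ up ρ, g ν + g l := by
  rw [sum_congr rfl fun μ hμ => (sum_erase_add _ g (mem_down.mpr (mem_up.mp hμ))).symm,
    sum_congr rfl fun ρ hρ => (sum_erase_add _ g (mem_up.mpr (mem_down.mp hρ))).symm,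
    sum_add_distrib, sum_add_distrib, sum_const, sum_const, card_up_eq_card_down_add_one,
    succ_nsmul, sum_up_sum_down_erase, add_assoc]

end PartitionSeq

namespace IsSYTChain

open PartitionSeq

variable {μ ν : PartitionSeq} {c : ℕ → PartitionSeq} {n : ℕ}

lemma size_apply (hc : IsSYTChain μ c) {k : ℕ} (hk : k ≤ μ.size) :
    (c k).size = k := by
  induction k with
  | zero => exact size_eq_zero_iff.mpr (part_injective (funext hc.1))
  | succ k ih => rw [(hc.2.2 k hk).2, ih (by omega)]

lemma covers (hc : IsSYTChain μ c) (hn : μ.size = n + 1) : Covers (c n) μ := by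
  have hstep := hc.2.2 n (by omega)
  rwa [hc.2.1 (n + 1) hn.le] at hstep

lemma restrict (hc : IsSYTChain μ c) (hn : μ.size = n + 1) :
    IsSYTChain (c n) (fun k => c (min k n)) := by
  have hcn := hc.size_apply (k := n) (by omega)
  refine ⟨by simpa using hc.1, fun k hk => ?_, fun k hk => ?_⟩
  · simp only [min_eq_right (hcn ▸ hk)]
  · simp only [min_eq_left (show k ≤ n by omega), min_eq_left (show k + 1 ≤ n by omega)]
    exact hc.2.2 k (by omega)

lemma extend (hc : IsSYTChain ν c) (hνμ : Covers ν μ) :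
    IsSYTChain μ (fun k => if k ≤ ν.size then c k else μ) := by
  have := hνμ.2
  refine ⟨by simpa using hc.1, fun k hk => if_neg (by omega), fun k hk => ?_⟩
  rcases (by omega : k < ν.size ∨ k = ν.size) with hk | rfl
  · simp only [if_pos hk.le, if_pos (show k + 1 ≤ ν.size by omega)]
    exact hc.2.2 k hk
  · simp only [le_refl, if_true, if_neg (show ¬ν.size + 1 ≤ ν.size by omega), hc.2.1 _ le_rfl]
    exact hνμ

end IsSYTChain

namespace PartitionSeq

open Finset Nat

lemma finite_setOf_isSYTChain (μ : PartitionSeq) : {c | IsSYTChain μ c}.Finite := by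
  refine Set.Finite.of_finite_image (f := fun c (k : Fin (μ.size + 1)) => c k) ?_ ?_
  · refine (Set.Finite.pi' fun k : Fin (μ.size + 1) => finite_setOf_size_eq k).subset ?_
    rintro _ ⟨c, hc, rfl⟩ k
    exact hc.size_apply (by omega)
  · intro c hc c' hc' h
    funext k
    rcases le_or_gt k μ.size with hk | hk
    · exact congrFun h ⟨k, by omega⟩
    · rw [hc.2.1 k hk.le, hc'.2.1 k hk.le]

noncomputable def chains (μ : PartitionSeq) : Finset (ℕ → PartitionSeq) :=
  (finite_setOf_isSYTChain μ).toFinset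

@[simp] lemma mem_chains {μ : PartitionSeq} {c : ℕ → PartitionSeq} :
    c ∈ chains μ ↔ IsSYTChain μ c :=
  Set.Finite.mem_toFinset _

lemma dimSYT_eq_card_chains (μ : PartitionSeq) : dimSYT μ = #(chains μ) :=
  Set.ncard_eq_toFinset_card _ _

lemma dimSYT_bot : dimSYT ⊥ = 1 := by
  have hbot : (⊥ : PartitionSeq).size = 0 := size_eq_zero_iff.mpr rfl
  refine Set.ncard_eq_one.mpr ⟨fun _ => ⊥, Set.ext fun c => ⟨fun hc => ?_, ?_⟩⟩
  · exact funext fun k => hc.2.1 k (by omega)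
  · rintro rfl
    exact ⟨fun _ => rfl, fun _ _ => rfl, fun k hk => absurd hk (by omega)⟩

/-- Restricting a chain of `μ` to its first `|ν|` steps identifies the chains of `μ` through `ν`
with the chains of `ν`. -/
lemma card_chains_filter_apply_eq {ν μ : PartitionSeq} (hνμ : Covers ν μ) :
    #((chains μ).filter fun c => c ν.size = ν) = #(chains ν) := by
  have hμ := hνμ.2
  refine card_nbij' (fun c k => c (min k ν.size)) (fun c k => if k ≤ ν.size then c k else μ)
    (fun c hc => ?_) (fun c hc => ?_) (fun c hc => ?_) (fun c hc => ?_)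
  all_goals simp only [mem_coe, mem_filter, mem_chains] at hc ⊢
  · simpa only [hc.2] using hc.1.restrict hμ
  · exact ⟨hc.extend hνμ, by simp [hc.2.1 _ le_rfl]⟩
  · funext k
    split_ifs with hk
    · rw [min_eq_left hk]
    · exact (hc.1.2.1 k (by omega)).symm
  · funext k
    rcases le_or_gt k ν.size with hk | hk
    · simp [hk]
    · simp [min_eq_right hk.le, hc.2.1 _ le_rfl, hc.2.1 k hk.le]

theorem dimSYT_eq_sum_down {μ : PartitionSeq} (hμ : μ.size ≠ 0) :
    dimSYT μ = ∑ ν ∈ down μ, dimSYT ν := by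
  obtain ⟨n, hn⟩ := exists_eq_succ_of_ne_zero hμ
  rw [dimSYT_eq_card_chains, card_eq_sum_card_fiberwise (f := fun c => c n) (t := down μ)
    fun c hc => mem_down.mpr ((mem_chains.mp hc).covers hn)]
  refine sum_congr rfl fun ν hν => ?_
  have hνμ := mem_down.mp hν
  have hνn : ν.size = n := by have := hνμ.2; omega
  rw [dimSYT_eq_card_chains, ← card_chains_filter_apply_eq hνμ, hνn]

theorem sum_up_dimSYT (l : PartitionSeq) : ∑ μ ∈ up l, dimSYT μ = (l.size + 1) * dimSYT l := by
  have hdown : ∀ ρ ∈ down l, ∑ ν ∈ up ρ, dimSYT ν = l.size * dimSYT ρ := fun ρ hρ => by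
    rw [sum_up_dimSYT ρ, (mem_down.mp hρ).2]
  calc ∑ μ ∈ up l, dimSYT μ = ∑ μ ∈ up l, ∑ ν ∈ down μ, dimSYT ν :=
        sum_congr rfl fun μ hμ => dimSYT_eq_sum_down (by rw [(mem_up.mp hμ).2]; omega)
    _ = ∑ ρ ∈ down l, ∑ ν ∈ up ρ, dimSYT ν + dimSYT l := sum_up_sum_down _ l
    _ = l.size * ∑ ρ ∈ down l, dimSYT ρ + dimSYT l := by rw [sum_congr rfl hdown, mul_sum]
    _ = (l.size + 1) * dimSYT l := by
        rcases eq_or_ne l.size 0 with h | h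
        · rw [h]; ring
        · rw [← dimSYT_eq_sum_down h]; ring
termination_by l.size
decreasing_by have := (mem_down.mp hρ).2; omega

theorem sum_dimSYT_sq (N : ℕ) : ∑ μ ∈ ofSize N, dimSYT μ ^ 2 = N ! := by
  induction N with
  | zero => simp [ofSize_zero, dimSYT_bot]
  | succ N ih =>
    calc ∑ μ ∈ ofSize (N + 1), dimSYT μ ^ 2
        = ∑ μ ∈ ofSize (N + 1), ∑ ν ∈ down μ, dimSYT μ * dimSYT ν :=
          sum_congr rfl fun μ hμ => by
            rw [sq, ← mul_sum, ← dimSYT_eq_sum_down (by rw [mem_ofSize.mp hμ]; omega)]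
      _ = ∑ ν ∈ ofSize N, ∑ μ ∈ up ν, dimSYT μ * dimSYT ν := sum_comm' fun μ ν => by
          simp only [mem_ofSize, mem_down, mem_up]
          exact ⟨fun h => ⟨h.2, by have := h.2.2; omega⟩, fun h => ⟨by rw [h.1.2, h.2], h.1⟩⟩
      _ = ∑ ν ∈ ofSize N, (N + 1) * dimSYT ν ^ 2 := sum_congr rfl fun ν hν => by
          rw [← sum_mul, sum_up_dimSYT, mem_ofSize.mp hν, sq, mul_assoc]
      _ = (N + 1)! := by rw [← mul_sum, ih, factorial_succ]

end PartitionSeq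

/-- The sum of `(dim λ)²` over all partitions `λ` of `N` equals `N!`. -/
theorem sum_dim_sq_eq_factorial (N : ℕ) :
    (∑' μ : PartitionSeq, if μ.size = N then (dimSYT μ : ℝ) ^ 2 else 0)
      = (Nat.factorial N : ℝ) := by
  rw [tsum_eq_sum (s := PartitionSeq.ofSize N) fun μ hμ =>
      if_neg (mt PartitionSeq.mem_ofSize.mpr hμ),
    Finset.sum_congr rfl fun μ hμ => if_pos (PartitionSeq.mem_ofSize.mp hμ)]
  exact_mod_cast PartitionSeq.sum_dimSYT_sq N
end

section
/- Let u > 0 and v ∈ ℝ, and let z ∈ ℂ with Im z > 0 satisfy |z| = e^{−u/2} and |z − 1| = e^{−u/4 − v/2}. Then cosh(u/2) − e^{−v}/2 ∈ [−1, 1] and arg z = arccos(cosh(u/2) − e^{−v}/2). -/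
/-!
The law of cosines in the triangle `0, 1, z` gives
`cos (arg z) = (‖z‖² + 1 - ‖z - 1‖²) / (2‖z‖)`, which for the given norms simplifies to
`cosh (u / 2) - e^{-v} / 2`. Since `Im z > 0`, `arg z ∈ [0, π]`, where `arccos` inverts `cos`.
-/

theorem Complex.cos_arg_eq_law_of_cosines {z : ℂ} (hz : z ≠ 0) :
    Real.cos z.arg = (‖z‖ ^ 2 + 1 - ‖z - 1‖ ^ 2) / (2 * ‖z‖) := by
  have hnorm : ‖z‖ ≠ 0 := norm_ne_zero_iff.mpr hz
  rw [Complex.cos_arg hz, Complex.sq_norm (z - 1), Complex.normSq_sub, ← Complex.sq_norm]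
  simp only [map_one, mul_one]
  field_simp
  ring

theorem arg_intersection_point_eq_arccos_general
    (u v : ℝ) (z : ℂ) (hz : 0 < z.im)
    (habs : ‖z‖ = Real.exp (-u / 2))
    (habs1 : ‖z - 1‖ = Real.exp (-u / 4 - v / 2)) :
    Real.cosh (u / 2) - Real.exp (-v) / 2 ∈ Set.Icc (-1 : ℝ) 1 ∧
      Complex.arg z = Real.arccos (Real.cosh (u / 2) - Real.exp (-v) / 2) := by
  have hz0 : z ≠ 0 := fun h => by simp [h] at hz
  have hinv : Real.exp (u / 2) = (Real.exp (-(u / 2)))⁻¹ := by rw [Real.exp_neg, inv_inv]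
  have hsq : Real.exp (-u / 4 - v / 2) ^ 2 = Real.exp (-(u / 2)) * Real.exp (-v) := by
    rw [← Real.exp_nat_mul, ← Real.exp_add]
    ring_nf
  have hcos : Real.cos z.arg = Real.cosh (u / 2) - Real.exp (-v) / 2 := by
    rw [Complex.cos_arg_eq_law_of_cosines hz0, habs, habs1, hsq, Real.cosh_eq, hinv, neg_div]
    field_simp
    ring
  refine ⟨hcos ▸ ⟨Real.neg_one_le_cos _, Real.cos_le_one _⟩, ?_⟩
  rw [← hcos, Real.arccos_cos (Complex.arg_nonneg_iff.mpr hz.le) (Complex.arg_le_pi z)]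

/-- If `Im z > 0`, `|z| = e^{-u/2}` and `|z - 1| = e^{-u/4 - v/2}` with
`u > 0`, then `cosh(u/2) - e^{-v}/2 ∈ [-1, 1]` and
`arg z = arccos(cosh(u/2) - e^{-v}/2)`. -/
theorem arg_intersection_point_eq_arccos
    (u v : ℝ) (hu : 0 < u) (z : ℂ) (hz : 0 < z.im)
    (habs : ‖z‖ = Real.exp (-u / 2))
    (habs1 : ‖z - 1‖ = Real.exp (-u / 4 - v / 2)) :
    Real.cosh (u / 2) - Real.exp (-v) / 2 ∈ Set.Icc (-1 : ℝ) 1 ∧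
      Complex.arg z = Real.arccos (Real.cosh (u / 2) - Real.exp (-v) / 2) :=
  arg_intersection_point_eq_arccos_general u v z hz habs habs1
end
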